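/- If a semantic linear Horn system has a solution, then both μ and ν are solutions of it, and every solution R satisfies μ j ⊆ R j and R j ⊆ ν j for every j : Fin n; that is, the solutions are exactly those tuples between μ and ν in the componentwise inclusion order that satisfy all clauses, with μ the least and ν the greatest solution. -/

import Mathlib

universe u

/-- A semantic Horn system over `M` with `n` predicate places of arities `k`. -/
structure HornSystem (M : Type u) (n : ℕ) (k : Fin n → ℕ) where
  /-- index type for base clauses -/
  BaseIdx : Type u
  baseTarget : BaseIdx → Fin n
  BaseParam : BaseIdx → Type u
  baseC : (b : BaseIdx) → BaseParam b → Prop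
  baseHead : (b : BaseIdx) → BaseParam b → Fin (k (baseTarget b)) → M
  /-- index type for induction clauses -/
  IndIdx : Type u
  indTarget : IndIdx → Fin n
  IndParam : IndIdx → Type u
  indC : (c : IndIdx) → IndParam c → Prop
  indLen : IndIdx → ℕ
  indLenPos : ∀ c, 1 ≤ indLen c
  indBodyIdx : (c : IndIdx) → Fin (indLen c) → Fin n
  indBody : (c : IndIdx) → (l : Fin (indLen c)) → IndParam c → Fin (k (indBodyIdx c l)) → M
  indHead : (c : IndIdx) → IndParam c → Fin (k (indTarget c)) → M
  /-- index type for end clauses -/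
  EndIdx : Type u
  EndParam : EndIdx → Type u
  endC : (e : EndIdx) → EndParam e → Prop
  endLen : EndIdx → ℕ
  endLenPos : ∀ e, 1 ≤ endLen e
  endBodyIdx : (e : EndIdx) → Fin (endLen e) → Fin n
  endBody : (e : EndIdx) → (l : Fin (endLen e)) → EndParam e → Fin (k (endBodyIdx e l)) → M

namespace HornSystem

variable {M : Type u} {n : ℕ} {k : Fin n → ℕ}

/-- `R` satisfies all base clauses. -/
def SatBase (S : HornSystem M n k) (R : ∀ j, Set (Fin (k j) → M)) : Prop :=
  ∀ b p, S.baseC b p → S.baseHead b p ∈ R (S.baseTarget b)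

/-- `R` satisfies all induction clauses. -/
def SatInd (S : HornSystem M n k) (R : ∀ j, Set (Fin (k j) → M)) : Prop :=
  ∀ c p, S.indC c p → (∀ l, S.indBody c l p ∈ R (S.indBodyIdx c l)) →
    S.indHead c p ∈ R (S.indTarget c)

/-- `R` satisfies all end clauses. -/
def SatEnd (S : HornSystem M n k) (R : ∀ j, Set (Fin (k j) → M)) : Prop :=
  ∀ e, ¬ ∃ p, S.endC e p ∧ ∀ l, S.endBody e l p ∈ R (S.endBodyIdx e l)

/-- `R` is a solution of the system: it satisfies every clause. -/
def IsSolution (S : HornSystem M n k) (R : ∀ j, Set (Fin (k j) → M)) : Prop :=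
  S.SatBase R ∧ S.SatInd R ∧ S.SatEnd R

/-- The immediate consequence operator of the system. -/
def F (S : HornSystem M n k) (R : ∀ j, Set (Fin (k j) → M)) :
    ∀ j, Set (Fin (k j) → M) := fun j =>
  {a | (∃ b, ∃ h : S.baseTarget b = j, ∃ p, S.baseC b p ∧ a = h ▸ S.baseHead b p) ∨
       (∃ c, ∃ h : S.indTarget c = j, ∃ p, S.indC c p ∧
          (∀ l, S.indBody c l p ∈ R (S.indBodyIdx c l)) ∧ a = h ▸ S.indHead c p)}

theorem F_mono (S : HornSystem M n k) : Monotone S.F := by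
  intro R R' h j a ha
  rcases ha with ⟨b, hb, p, hC, ha⟩ | ⟨c, hc, p, hC, hbody, ha⟩
  · exact Or.inl ⟨b, hb, p, hC, ha⟩
  · exact Or.inr ⟨c, hc, p, hC, fun l => h _ (hbody l), ha⟩

/-- The immediate consequence operator, bundled as a monotone map. -/
def Fhom (S : HornSystem M n k) :
    (∀ j, Set (Fin (k j) → M)) →o (∀ j, Set (Fin (k j) → M)) :=
  ⟨S.F, S.F_mono⟩

/-- The least fixed point of the immediate consequence operator
(exists by the Knaster–Tarski theorem). -/
def mu (S : HornSystem M n k) : ∀ j, Set (Fin (k j) → M) :=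
  OrderHom.lfp S.Fhom

end HornSystem
/-- A semantic dual Horn system over `M` with `n` predicate places of arities `k`. -/
structure DualHornSystem (M : Type u) (n : ℕ) (k : Fin n → ℕ) where
  /-- index type of clauses -/
  Idx : Type u
  Param : Idx → Type u
  C : (c : Idx) → Param c → Prop
  /-- at most one body atom: optionally an index `i` together with a body map -/
  body : (c : Idx) → Option ((i : Fin n) × (Param c → Fin (k i) → M))
  hLen : Idx → ℕ
  hIdx : (c : Idx) → Fin (hLen c) → Fin n
  hMap : (c : Idx) → (l : Fin (hLen c)) → Param c → Fin (k (hIdx c l)) → M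

namespace DualHornSystem

variable {M : Type u} {n : ℕ} {k : Fin n → ℕ}

/-- `R` is a solution of the dual Horn system: it satisfies every clause. -/
def IsSolution (D : DualHornSystem M n k) (R : ∀ j, Set (Fin (k j) → M)) : Prop :=
  ∀ c p, D.C c p → (∀ b ∈ D.body c, b.2 p ∈ R b.1) →
    ∃ l, D.hMap c l p ∈ R (D.hIdx c l)

/-- The dualization of a dual Horn system, a semantic Horn system. -/
def dualize (D : DualHornSystem M n k) : HornSystem M n k where
  BaseIdx := {c : D.Idx // (D.body c).isSome ∧ D.hLen c = 0}
  baseTarget := fun b => ((D.body b.1).get b.2.1).1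
  BaseParam := fun b => D.Param b.1
  baseC := fun b => D.C b.1
  baseHead := fun b => ((D.body b.1).get b.2.1).2
  IndIdx := {c : D.Idx // (D.body c).isSome ∧ 1 ≤ D.hLen c}
  indTarget := fun c => ((D.body c.1).get c.2.1).1
  IndParam := fun c => D.Param c.1
  indC := fun c => D.C c.1
  indLen := fun c => D.hLen c.1
  indLenPos := fun c => c.2.2
  indBodyIdx := fun c => D.hIdx c.1
  indBody := fun c => D.hMap c.1
  indHead := fun c => ((D.body c.1).get c.2.1).2
  EndIdx := {c : D.Idx // D.body c = none ∧ 1 ≤ D.hLen c}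
  EndParam := fun e => D.Param e.1
  endC := fun e => D.C e.1
  endLen := fun e => D.hLen e.1
  endLenPos := fun e => e.2.2
  endBodyIdx := fun e => D.hIdx e.1
  endBody := fun e => D.hMap e.1

end DualHornSystem
namespace HornSystem

variable {M : Type u} {n : ℕ} {k : Fin n → ℕ}

/-- A linear Horn system (every induction and end clause has exactly one body atom),
viewed as a semantic dual Horn system: each base clause becomes a clause with no
body atom and one head atom, each induction clause a clause with one body atom and
one head atom, and each end clause a clause with one body atom and empty head. -/
def toDual (S : HornSystem M n k)
    (hind : ∀ c, S.indLen c = 1) (hend : ∀ e, S.endLen e = 1) :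
    DualHornSystem M n k where
  Idx := S.BaseIdx ⊕ S.IndIdx ⊕ S.EndIdx
  Param := fun c => match c with
    | Sum.inl b => S.BaseParam b
    | Sum.inr (Sum.inl c) => S.IndParam c
    | Sum.inr (Sum.inr e) => S.EndParam e
  C := fun c => match c with
    | Sum.inl b => S.baseC b
    | Sum.inr (Sum.inl c) => S.indC c
    | Sum.inr (Sum.inr e) => S.endC e
  body := fun c => match c with
    | Sum.inl _ => none
    | Sum.inr (Sum.inl c) =>
        some ⟨S.indBodyIdx c ⟨0, S.indLenPos c⟩, S.indBody c ⟨0, S.indLenPos c⟩⟩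
    | Sum.inr (Sum.inr e) =>
        some ⟨S.endBodyIdx e ⟨0, S.endLenPos e⟩, S.endBody e ⟨0, S.endLenPos e⟩⟩
  hLen := fun c => match c with
    | Sum.inl _ => 1
    | Sum.inr (Sum.inl _) => 1
    | Sum.inr (Sum.inr _) => 0
  hIdx := fun c => match c with
    | Sum.inl b => fun _ => S.baseTarget b
    | Sum.inr (Sum.inl c) => fun _ => S.indTarget c
    | Sum.inr (Sum.inr _) => fun l => l.elim0
  hMap := fun c => match c with
    | Sum.inl b => fun _ => S.baseHead b
    | Sum.inr (Sum.inl c) => fun _ => S.indHead c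
    | Sum.inr (Sum.inr _) => fun l => l.elim0

end HornSystem

/-!
The least fixed point `μ` of the immediate consequence operator is its least prefixed point, and
prefixed points are exactly the tuples satisfying the base and induction clauses; so `μ` lies below
every solution, and since end clauses only get easier on smaller tuples, `μ` is itself a solution
as soon as some solution exists.

For a linear system, complementation exchanges the solutions of the system and of its
dualization: the base clauses of one are the end clauses of the other, and an induction clause
with a single body atom turns into its contrapositive. Hence `ν = μ'ᶜ` is a solution, and it lies
above every solution `R` because `μ'` lies below the solution `Rᶜ` of the dualization.
-/

theorem Fin.forall_iff_of_eq_one {m : ℕ} (hm : m = 1) (l₀ : Fin m) {p : Fin m → Prop} :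
    (∀ l, p l) ↔ p l₀ := by
  subst hm
  exact ⟨fun h => h l₀, fun h l => Subsingleton.elim l₀ l ▸ h⟩

namespace HornSystem

variable {M : Type u} {n : ℕ} {k : Fin n → ℕ} (S : HornSystem M n k)

theorem F_le_iff {R : ∀ j, Set (Fin (k j) → M)} : S.F R ≤ R ↔ S.SatBase R ∧ S.SatInd R := by
  constructor
  · intro h
    exact ⟨fun b p hC => h _ (Or.inl ⟨b, rfl, p, hC, rfl⟩),
      fun c p hC hbody => h _ (Or.inr ⟨c, rfl, p, hC, hbody, rfl⟩)⟩
  · rintro ⟨hbase, hind⟩ j a (⟨b, rfl, p, hC, rfl⟩ | ⟨c, rfl, p, hC, hbody, rfl⟩)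
    · exact hbase b p hC
    · exact hind c p hC hbody

variable {S}

theorem SatEnd.anti {R R' : ∀ j, Set (Fin (k j) → M)} (hRR' : R ≤ R') (h : S.SatEnd R') :
    S.SatEnd R :=
  fun e ⟨p, hC, hbody⟩ => h e ⟨p, hC, fun l => hRR' _ (hbody l)⟩

theorem mu_le_of_isSolution {R : ∀ j, Set (Fin (k j) → M)} (h : S.IsSolution R) : S.mu ≤ R :=
  OrderHom.lfp_le _ (S.F_le_iff.2 ⟨h.1, h.2.1⟩)

theorem mu_isSolution {R : ∀ j, Set (Fin (k j) → M)} (h : S.IsSolution R) :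
    S.IsSolution S.mu :=
  have hmu := S.F_le_iff.1 S.Fhom.map_lfp.le
  ⟨hmu.1, hmu.2, h.2.2.anti (mu_le_of_isSolution h)⟩

section Linear

variable (S) (hind : ∀ c, S.indLen c = 1) (hend : ∀ e, S.endLen e = 1)

theorem satBase_dualize_compl_iff {R : ∀ j, Set (Fin (k j) → M)} :
    (S.toDual hind hend).dualize.SatBase (fun j => (R j)ᶜ) ↔ S.SatEnd R := by
  constructor
  · rintro h e ⟨p, hC, hbody⟩
    exact h ⟨.inr (.inr e), rfl, rfl⟩ p hC ((Fin.forall_iff_of_eq_one (hend e) _).1 hbody)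
  · rintro h ⟨b | c | e, hb⟩ p hC
    · exact absurd hb.1 Bool.false_ne_true
    · exact absurd hb.2 one_ne_zero
    · exact fun hmem => h e ⟨p, hC, (Fin.forall_iff_of_eq_one (hend e) _).2 hmem⟩

theorem satInd_dualize_compl_iff {R : ∀ j, Set (Fin (k j) → M)} :
    (S.toDual hind hend).dualize.SatInd (fun j => (R j)ᶜ) ↔ S.SatInd R := by
  constructor
  · intro h c p hC hbody
    by_contra hhead
    exact h ⟨.inr (.inl c), rfl, le_rfl⟩ p hC (fun _ => hhead)
      ((Fin.forall_iff_of_eq_one (hind c) _).1 hbody)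
  · rintro h ⟨b | c | e, hb⟩ p hC hhead
    · exact absurd hb.1 Bool.false_ne_true
    · exact fun hbody => hhead ⟨0, Nat.one_pos⟩ (h c p hC ((Fin.forall_iff_of_eq_one (hind c) _).2 hbody))
    · exact absurd hb.2 (Nat.not_succ_le_zero 0)

theorem satEnd_dualize_compl_iff {R : ∀ j, Set (Fin (k j) → M)} :
    (S.toDual hind hend).dualize.SatEnd (fun j => (R j)ᶜ) ↔ S.SatBase R := by
  constructor
  · intro h b p hC
    by_contra hhead
    exact h ⟨.inl b, rfl, le_rfl⟩ ⟨p, hC, fun _ => hhead⟩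
  · rintro h ⟨b | c | e, hb⟩ ⟨p, hC, hhead⟩
    · exact hhead ⟨0, Nat.one_pos⟩ (h b p hC)
    · exact Option.some_ne_none _ hb.1
    · exact Option.some_ne_none _ hb.1

theorem isSolution_dualize_compl_iff {R : ∀ j, Set (Fin (k j) → M)} :
    (S.toDual hind hend).dualize.IsSolution (fun j => (R j)ᶜ) ↔ S.IsSolution R := by
  rw [IsSolution, IsSolution, satBase_dualize_compl_iff, satInd_dualize_compl_iff,
    satEnd_dualize_compl_iff]
  exact ⟨fun ⟨he, hi, hb⟩ => ⟨hb, hi, he⟩, fun ⟨hb, hi, he⟩ => ⟨he, hi, hb⟩⟩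

theorem isSolution_compl_mu_dualize {R : ∀ j, Set (Fin (k j) → M)} (h : S.IsSolution R) :
    S.IsSolution (fun j => ((S.toDual hind hend).dualize.mu j)ᶜ) := by
  rw [← isSolution_dualize_compl_iff S hind hend]
  simp only [compl_compl]
  exact mu_isSolution ((isSolution_dualize_compl_iff S hind hend).2 h)

theorem le_compl_mu_dualize {R : ∀ j, Set (Fin (k j) → M)} (h : S.IsSolution R) (j : Fin n) :
    R j ⊆ ((S.toDual hind hend).dualize.mu j)ᶜ :=
  Set.subset_compl_comm.1 (mu_le_of_isSolution ((isSolution_dualize_compl_iff S hind hend).2 h) j)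

end Linear

end HornSystem

/-- For a semantic linear Horn system (every induction and end clause
has exactly one body atom) that has a solution: both `μ` (the least fixed point of its
immediate consequence operator) and `ν` (the componentwise complement of the least fixed
point of the immediate consequence operator of the dualization of the system viewed as
a dual Horn system) are solutions, and every solution `R` satisfies
`μ j ⊆ R j` and `R j ⊆ ν j` for every `j`. -/
theorem linearHornSystem_mu_nu_solutions {M : Type u} {n : ℕ} {k : Fin n → ℕ}
    (S : HornSystem M n k)
    (hind : ∀ c, S.indLen c = 1) (hend : ∀ e, S.endLen e = 1)
    (hsol : ∃ R : ∀ j, Set (Fin (k j) → M), S.IsSolution R) :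
    S.IsSolution S.mu ∧
    S.IsSolution (fun j => (((S.toDual hind hend).dualize.mu) j)ᶜ) ∧
    ∀ R : ∀ j, Set (Fin (k j) → M), S.IsSolution R →
      ∀ j, S.mu j ⊆ R j ∧ R j ⊆ (((S.toDual hind hend).dualize.mu) j)ᶜ := by
  obtain ⟨R₀, hR₀⟩ := hsol
  exact ⟨HornSystem.mu_isSolution hR₀, S.isSolution_compl_mu_dualize hind hend hR₀,
    fun R hR j => ⟨HornSystem.mu_le_of_isSolution hR j, S.le_compl_mu_dualize hind hend hR j⟩⟩
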